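/- For any matrix M and a real quadratic ax² + bx + c = Tr[M*M] ≥ 0 for all real x with a ≥ 0, one has b² ≤ 4ac; applied with M = i[(ρ^α+ρ^{1−α})/2, X₀]·x + {(ρ^α+ρ^{1−α})/2, Y₀}, this yields |Tr[(ρ^α+ρ^{1−α})²(i[X,Y])]|² ≤ 4·(2K_{ρ,α}(X) + I-terms)·(2L_{ρ,α}(Y) + J-terms); in particular the discriminant inequality: |Tr[(ρ^α+ρ^{1−α})²[X,Y]]|² ≤ 16 K'_{ρ,α}(X) L'_{ρ,α}(Y) where K'_{ρ,α}(X) = (1/4)Tr[(i[ρ^α,X₀])² + (i[ρ^{1−α},X₀])²] + I_{ρ,α}(X) and L'_{ρ,α}(Y) = (1/4)Tr[{ρ^α,Y₀}² + {ρ^{1−α},Y₀}²] + J_{ρ,α}(Y). -/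

import Mathlib

/-!
With `C = ρ^α + ρ^(1-α)`, the matrices `P = i[C, X₀]` and `Q = {C, Y₀}` are Hermitian,
and `Tr[P Q] = i Tr[C² [X, Y]]`: shifting `X`, `Y` by multiples of the identity does not
change their commutator, and the remaining terms cancel by cyclicity of the trace.
Cauchy–Schwarz for the Hilbert–Schmidt inner product (the nonnegative discriminant of
`x ↦ Tr[(x P + Q)²]`) gives `|Tr[P Q]|² ≤ Tr[P²] Tr[Q²]`, and splitting `P` and `Q` into
their `ρ^α` and `ρ^(1-α)` parts shows `Tr[P²] = 4 K'` and `Tr[Q²] = 4 L'`.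
-/

open Matrix ComplexOrder

/-- The real power of a positive semidefinite matrix, defined via the
continuous functional calculus (spectral decomposition). -/
noncomputable def mpow {n : Type*} [Fintype n] [DecidableEq n]
    (ρ : Matrix n n ℂ) (hρ : ρ.PosSemidef) (α : ℝ) : Matrix n n ℂ :=
  hρ.1.cfc (fun x : ℝ => x ^ α)

theorem sub_smul_one_commutator {R A : Type*} [CommRing R] [Ring A] [Algebra R A]
    (x y : A) (a b : R) :
    (x - a • 1) * (y - b • 1) - (y - b • 1) * (x - a • 1) = x * y - y * x := by
  simp only [sub_mul, mul_sub, smul_mul_assoc, mul_smul_comm, one_mul, mul_one]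
  module

namespace Matrix

variable {n : Type*} [Fintype n]

theorem trace_commutator_mul_anticommutator {R : Type*} [CommRing R] (C X Y : Matrix n n R) :
    ((C * X - X * C) * (C * Y + Y * C)).trace = (C * C * (X * Y - Y * X)).trace := by
  have hXCYC : (X * C * Y * C).trace = (C * X * C * Y).trace := by
    rw [trace_mul_comm, ← Matrix.mul_assoc, ← Matrix.mul_assoc]
  have hCXYC : (C * X * Y * C).trace = (C * C * X * Y).trace := by
    rw [trace_mul_comm, ← Matrix.mul_assoc, ← Matrix.mul_assoc]
  have hXCCY : (X * C * C * Y).trace = (C * C * Y * X).trace := by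
    rw [Matrix.mul_assoc, Matrix.mul_assoc, trace_mul_comm, ← Matrix.mul_assoc]
  simp only [sub_mul, mul_add, mul_sub, ← Matrix.mul_assoc, trace_add, trace_sub,
    hXCYC, hCXYC, hXCCY]
  ring

theorem norm_trace_mul_conjTranspose_sq_le {𝕜 : Type*} [RCLike 𝕜] (A B : Matrix n n 𝕜) :
    ‖(A * Bᴴ).trace‖ ^ 2 ≤ RCLike.re (A * Aᴴ).trace * RCLike.re (B * Bᴴ).trace := by
  classical
  let : SeminormedAddCommGroup (Matrix n n 𝕜) := toMatrixSeminormedAddCommGroup 1 .one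
  let : InnerProductSpace 𝕜 (Matrix n n 𝕜) := toMatrixInnerProductSpace 1 .one
  have inner_eq (C D : Matrix n n 𝕜) : (inner 𝕜 C D : 𝕜) = (D * Cᴴ).trace := by
    change (D * 1 * Cᴴ).trace = _
    rw [Matrix.mul_one]
  have := inner_mul_inner_self_le (𝕜 := 𝕜) B A
  have hswap : B * Aᴴ = (A * Bᴴ)ᴴ := by simp [conjTranspose_mul]
  rw [inner_eq, inner_eq, inner_eq, inner_eq, hswap, trace_conjTranspose, norm_star] at this
  linarith

namespace IsHermitian

theorem norm_trace_mul_sq_le {P Q : Matrix n n ℂ} (hP : P.IsHermitian) (hQ : Q.IsHermitian) :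
    ‖(P * Q).trace‖ ^ 2 ≤ (P * P).trace.re * (Q * Q).trace.re := by
  simpa only [hP.eq, hQ.eq, RCLike.re_to_complex] using norm_trace_mul_conjTranspose_sq_le P Q

theorem I_smul_commutator {C X : Matrix n n ℂ} (hC : C.IsHermitian) (hX : X.IsHermitian) :
    (Complex.I • (C * X - X * C)).IsHermitian := by
  rw [IsHermitian, conjTranspose_smul, conjTranspose_sub, conjTranspose_mul, conjTranspose_mul,
    hC.eq, hX.eq, Complex.star_def, Complex.conj_I, neg_smul, ← smul_neg, neg_sub]

theorem anticommutator {C Y : Matrix n n ℂ} (hC : C.IsHermitian) (hY : Y.IsHermitian) :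
    (C * Y + Y * C).IsHermitian := by
  rw [IsHermitian, conjTranspose_add, conjTranspose_mul, conjTranspose_mul, hC.eq, hY.eq, add_comm]

end IsHermitian

variable [DecidableEq n]

theorem trace_add_mul_self {R : Type*} [CommRing R] (S T : Matrix n n R) :
    ((S + T) * (S + T)).trace = (S ^ 2 + T ^ 2).trace + 2 * (S * T).trace := by
  rw [show (S + T) * (S + T) = S ^ 2 + T ^ 2 + (S * T + T * S) by noncomm_ring]
  simp only [trace_add, trace_mul_comm T S]
  ring

theorem re_trace_add_mul_self (S T : Matrix n n ℂ) :
    ((S + T) * (S + T)).trace.re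
      = 4 * (((1 / 4 : ℂ) * (S ^ 2 + T ^ 2).trace).re + ((1 / 2 : ℂ) * (S * T).trace).re) := by
  rw [trace_add_mul_self]
  simp only [Complex.add_re, Complex.mul_re]
  norm_num
  ring

theorem IsHermitian.sub_trace_mul_smul_one {ρ X : Matrix n n ℂ} (hX : X.IsHermitian)
    (hρ : ρ.IsHermitian) : (X - (ρ * X).trace • (1 : Matrix n n ℂ)).IsHermitian := by
  have hreal : star (ρ * X).trace = (ρ * X).trace := by
    rw [← trace_conjTranspose, conjTranspose_mul, hX.eq, hρ.eq, trace_mul_comm]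
  rw [IsHermitian, conjTranspose_sub, conjTranspose_smul, conjTranspose_one, hreal, hX.eq]

end Matrix

theorem mpow_isHermitian {n : Type*} [Fintype n] [DecidableEq n]
    (ρ : Matrix n n ℂ) (hρ : ρ.PosSemidef) (α : ℝ) : (mpow ρ hρ α).IsHermitian := by
  rw [mpow, ← IsHermitian.cfc_eq]
  exact cfc_predicate _ ρ

theorem stmt7_general {n : Type*} [Fintype n] [DecidableEq n]
    (ρ : Matrix n n ℂ) (hρ : ρ.PosSemidef)
    (X Y : Matrix n n ℂ) (hX : X.IsHermitian) (hY : Y.IsHermitian)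
    (α : ℝ) :
    let X₀ := X - (ρ * X).trace • (1 : Matrix n n ℂ)
    let Y₀ := Y - (ρ * Y).trace • (1 : Matrix n n ℂ)
    let A := mpow ρ hρ α
    let B := mpow ρ hρ (1-α)
    let Iα : ℝ := ((1/2 : ℂ) * ((Complex.I • (A * X₀ - X₀ * A)) *
        (Complex.I • (B * X₀ - X₀ * B))).trace).re
    let Jα : ℝ := ((1/2 : ℂ) * ((A * Y₀ + Y₀ * A) * (B * Y₀ + Y₀ * B)).trace).re
    let K' : ℝ := ((1/4 : ℂ) * ((Complex.I • (A * X₀ - X₀ * A)) ^ 2 +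
        (Complex.I • (B * X₀ - X₀ * B)) ^ 2).trace).re + Iα
    let L' : ℝ := ((1/4 : ℂ) * ((A * Y₀ + Y₀ * A) ^ 2 +
        (B * Y₀ + Y₀ * B) ^ 2).trace).re + Jα
    ‖((A + B) ^ 2 * (X * Y - Y * X)).trace‖ ^ 2 ≤ 16 * K' * L' := by
  intro X₀ Y₀ A B Iα Jα K' L'
  have hC : (A + B).IsHermitian :=
    (mpow_isHermitian ρ hρ α).add (mpow_isHermitian ρ hρ (1 - α))
  set P := Complex.I • ((A + B) * X₀ - X₀ * (A + B)) with hP_def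
  set Q := (A + B) * Y₀ + Y₀ * (A + B) with hQ_def
  have hP : P.IsHermitian := hC.I_smul_commutator (hX.sub_trace_mul_smul_one hρ.1)
  have hQ : Q.IsHermitian := hC.anticommutator (hY.sub_trace_mul_smul_one hρ.1)
  have hPQ : ‖(P * Q).trace‖ = ‖((A + B) ^ 2 * (X * Y - Y * X)).trace‖ := by
    rw [smul_mul_assoc, trace_smul, trace_commutator_mul_anticommutator,
      (sub_smul_one_commutator X Y _ _ : X₀ * Y₀ - Y₀ * X₀ = _), smul_eq_mul, norm_mul,
      Complex.norm_I, one_mul, sq]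
  have hK : (P * P).trace.re = 4 * K' := by
    have hsplit :
        (A + B) * X₀ - X₀ * (A + B) = (A * X₀ - X₀ * A) + (B * X₀ - X₀ * B) := by
      noncomm_ring
    rw [hP_def, hsplit, smul_add]
    exact re_trace_add_mul_self _ _
  have hL : (Q * Q).trace.re = 4 * L' := by
    have hsplit :
        (A + B) * Y₀ + Y₀ * (A + B) = (A * Y₀ + Y₀ * A) + (B * Y₀ + Y₀ * B) := by
      noncomm_ring
    rw [hQ_def, hsplit]
    exact re_trace_add_mul_self _ _
  calc ‖((A + B) ^ 2 * (X * Y - Y * X)).trace‖ ^ 2 = ‖(P * Q).trace‖ ^ 2 := by rw [hPQ]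
    _ ≤ (P * P).trace.re * (Q * Q).trace.re := hP.norm_trace_mul_sq_le hQ
    _ = 16 * K' * L' := by rw [hK, hL]; ring

theorem stmt7 {n : Type*} [Fintype n] [DecidableEq n]
    (ρ : Matrix n n ℂ) (hρ : ρ.PosSemidef) (htr : ρ.trace = 1)
    (X Y : Matrix n n ℂ) (hX : X.IsHermitian) (hY : Y.IsHermitian)
    (α : ℝ) (hα : α ∈ Set.Icc (0:ℝ) 1) :
    let X₀ := X - (ρ * X).trace • (1 : Matrix n n ℂ)
    let Y₀ := Y - (ρ * Y).trace • (1 : Matrix n n ℂ)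
    let A := mpow ρ hρ α
    let B := mpow ρ hρ (1-α)
    let Iα : ℝ := ((1/2 : ℂ) * ((Complex.I • (A * X₀ - X₀ * A)) *
        (Complex.I • (B * X₀ - X₀ * B))).trace).re
    let Jα : ℝ := ((1/2 : ℂ) * ((A * Y₀ + Y₀ * A) * (B * Y₀ + Y₀ * B)).trace).re
    let K' : ℝ := ((1/4 : ℂ) * ((Complex.I • (A * X₀ - X₀ * A)) ^ 2 +
        (Complex.I • (B * X₀ - X₀ * B)) ^ 2).trace).re + Iα
    let L' : ℝ := ((1/4 : ℂ) * ((A * Y₀ + Y₀ * A) ^ 2 +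
        (B * Y₀ + Y₀ * B) ^ 2).trace).re + Jα
    ‖((A + B) ^ 2 * (X * Y - Y * X)).trace‖ ^ 2 ≤ 16 * K' * L' :=
  stmt7_general ρ hρ X Y hX hY α
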